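/- arXiv:2004.07650 — 3 statements merged into one kernel-verified Lean document; each statement's English description precedes it below -/
import Mathlib

section
/- Let G = (V, E) be a connected graph, c, t integers, and T₁, T₂, T' ⊆ V vertex sets with T' ⊆ T₁ ∪ T₂. Then the number of (T', (T₁∪T₂)∖T', t, c)-cuts (V', V∖V') such that every connected component of G[V'] contains at least one vertex of T' is at most O(t^{c(c+1)}). Specifically, each such V' is a disjoint union of at most c sets V₁,...,V_k with k ≤ c, Σ|V_i| ≤ t, where each (V_i, V∖V_i) is a simple (t,c)-cut with V_i ∩ T' ≠ ∅. -/
open SimpleGraph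

/-- The cut-set of a vertex set `A`: edges of `G` with one endpoint in `A` and one outside. -/
def ecut {V : Type*} (G : SimpleGraph V) (A : Set V) : Set (Sym2 V) :=
  {e | e ∈ G.edgeSet ∧ ∃ u v, e = s(u, v) ∧ u ∈ A ∧ v ∉ A}

/-- Edges all of whose endpoints lie in `A`. -/
def edgesWithin {V : Type*} (A : Set V) : Set (Sym2 V) :=
  {e | ∀ x ∈ e, x ∈ A}

/-- The set of endpoints of a set of edges. -/
def endpts {V : Type*} (F : Set (Sym2 V)) : Set V :=
  {x | ∃ e ∈ F, x ∈ e}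

/-- `F` intercepts the cut `(A, Aᶜ)`: no connected component of `G` with the edges of `F`
removed contains all edges of the cut-set of `A`. -/
def Intercepts {V : Type*} (G : SimpleGraph V) (F : Set (Sym2 V)) (A : Set V) : Prop :=
  ¬ ∃ u : V, ∀ e ∈ ecut G A,
    e ∈ (G.deleteEdges F).edgeSet ∧ ∀ x ∈ e, (G.deleteEdges F).Reachable u x

/-- A cut `(A, Aᶜ)` is atomic if both sides induce connected subgraphs. -/
def AtomicCut {V : Type*} (G : SimpleGraph V) (A : Set V) : Prop :=
  (G.induce A).Connected ∧ (G.induce Aᶜ).Connected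

/-- Two cuts are parallel if one side of the first is contained in one side of the second. -/
def ParallelCuts {V : Type*} (A B : Set V) : Prop :=
  A ⊆ B ∨ A ⊆ Bᶜ ∨ Aᶜ ⊆ B ∨ Aᶜ ⊆ Bᶜ

/-- A partition of the vertex set into nonempty clusters. -/
def IsVertexPartition {V : Type*} (Pa : Set (Set V)) : Prop :=
  (∀ P ∈ Pa, P.Nonempty) ∧ ∀ x : V, ∃! P, P ∈ Pa ∧ x ∈ P

/-- The intercluster edges of a vertex partition. -/
def interEdges {V : Type*} (G : SimpleGraph V) (Pa : Set (Set V)) : Set (Sym2 V) :=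
  {e | e ∈ G.edgeSet ∧ ∃ u v, e = s(u, v) ∧ ∀ P ∈ Pa, ¬(u ∈ P ∧ v ∈ P)}

/-- `W` is the vertex set of a connected component of `G`. -/
def IsComponentSet {V : Type*} (G : SimpleGraph V) (W : Set V) : Prop :=
  ∃ v : V, W = {u | G.Reachable u v}

/-- `E'` is an `IA_H(T, t, q, d, c)` set: it is the set of intercluster edges of a vertex
partition with connected parts, and within each connected component `W` of `H`, for every
nonempty `T' ⊆ T ∩ W` admitting a `(T', T∖T', t, d)`-cut of size `α ≤ d`, there is a
`(T', T∖T', q, α)`-cut whose cut-set has at most `max (α - c) 0` edges inside any single part. -/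
def IsIASet {V : Type*} (H : SimpleGraph V) (T : Set V) (t q d c : ℕ)
    (E' : Set (Sym2 V)) : Prop :=
  ∃ Pa : Set (Set V), IsVertexPartition Pa ∧ (∀ P ∈ Pa, (H.induce P).Connected) ∧
    E' = interEdges H Pa ∧
    ∀ W : Set V, IsComponentSet H W →
      ∀ T' : Set V, T' ⊆ T ∩ W → T'.Nonempty → ∀ α : ℕ, α ≤ d →
        (∃ A : Set V, A ⊆ W ∧ A.ncard ≤ t ∧ A ∩ T = T' ∧ (ecut H A).ncard = α) →
        ∃ B : Set V, B ⊆ W ∧ B.ncard ≤ q ∧ B ∩ T = T' ∧ (ecut H B).ncard ≤ α ∧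
          ∀ P ∈ Pa, (ecut H B ∩ edgesWithin P).ncard ≤ α - c

/-- The graph `G` restricted to the vertex set `U` (edges with both endpoints in `U`),
kept on the ambient vertex type. -/
def restrictG {V : Type*} (G : SimpleGraph V) (U : Set V) : SimpleGraph V where
  Adj u v := G.Adj u v ∧ u ∈ U ∧ v ∈ U
  symm := by
    constructor
    rintro u v ⟨h, hu, hv⟩
    exact ⟨h.symm, hv, hu⟩
  loopless := by
    constructor
    rintro v ⟨h, -⟩
    exact G.loopless.irrefl v h

noncomputable section
namespace CutAux

variable {V : Type*} [Fintype V] [DecidableEq V]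

open Classical in
/-- Undecided frontier pairs. -/
def front (G : SimpleGraph V) (st : Finset V × Finset (V × V)) : Finset (V × V) :=
  Finset.univ.filter (fun p => G.Adj p.1 p.2 ∧ p.1 ∈ st.1 ∧ p.2 ∉ st.1 ∧ p ∉ st.2)

open Classical in
def step (G : SimpleGraph V) (A : Set V) (st : Finset V × Finset (V × V)) :
    Finset V × Finset (V × V) :=
  if h : (front G st).Nonempty then
    if h.choose.2 ∈ A then (insert h.choose.2 st.1, st.2) else (st.1, insert h.choose st.2)
  else st

def run (G : SimpleGraph V) (A : Set V) (T0 : Finset V) (n : ℕ) : Finset V × Finset (V × V) :=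
  (step G A)^[n] (T0, ∅)

open Classical in
def trace (G : SimpleGraph V) (A : Set V) (T0 : Finset V) : ℕ → List ℕ
  | 0 => []
  | n + 1 =>
    trace G A T0 n ++
      (if h : (front G (run G A T0 n)).Nonempty then
        if h.choose.2 ∈ A then [] else [(run G A T0 n).1.card - T0.card]
      else [])

variable {G : SimpleGraph V} {A : Set V} {T0 : Finset V}

lemma run_succ (n : ℕ) : run G A T0 (n+1) = step G A (run G A T0 n) :=
  Function.iterate_succ_apply' _ _ _

lemma mem_front {st : Finset V × Finset (V × V)} {p : V × V} :
    p ∈ front G st ↔ G.Adj p.1 p.2 ∧ p.1 ∈ st.1 ∧ p.2 ∉ st.1 ∧ p ∉ st.2 := by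
  classical
  simp [front]

lemma case_empty (n : ℕ) (h : ¬ (front G (run G A T0 n)).Nonempty) :
    run G A T0 (n+1) = run G A T0 n ∧ trace G A T0 (n+1) = trace G A T0 n := by
  classical
  constructor
  · rw [run_succ, step, dif_neg h]
  · rw [trace, dif_neg h, List.append_nil]

lemma case_in (n : ℕ) (h : (front G (run G A T0 n)).Nonempty) (h2 : h.choose.2 ∈ A) :
    run G A T0 (n+1) = (insert h.choose.2 (run G A T0 n).1, (run G A T0 n).2) ∧
      trace G A T0 (n+1) = trace G A T0 n := by
  classical
  constructor
  · rw [run_succ, step, dif_pos h, if_pos h2]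
  · rw [trace, dif_pos h, if_pos h2, List.append_nil]

lemma case_out (n : ℕ) (h : (front G (run G A T0 n)).Nonempty) (h2 : h.choose.2 ∉ A) :
    run G A T0 (n+1) = ((run G A T0 n).1, insert h.choose (run G A T0 n).2) ∧
      trace G A T0 (n+1) = trace G A T0 n ++ [(run G A T0 n).1.card - T0.card] := by
  classical
  constructor
  · rw [run_succ, step, dif_pos h, if_neg h2]
  · rw [trace, dif_pos h, if_neg h2]


lemma mono_succ (n : ℕ) :
    (run G A T0 n).1 ⊆ (run G A T0 (n+1)).1 ∧ (run G A T0 n).2 ⊆ (run G A T0 (n+1)).2 ∧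
      trace G A T0 n <+: trace G A T0 (n+1) := by
  classical
  by_cases h : (front G (run G A T0 n)).Nonempty
  · by_cases h2 : h.choose.2 ∈ A
    · obtain ⟨e1, e2⟩ := case_in n h h2
      rw [e1, e2]
      exact ⟨Finset.subset_insert _ _, subset_rfl, List.prefix_rfl⟩
    · obtain ⟨e1, e2⟩ := case_out n h h2
      rw [e1, e2]
      exact ⟨subset_rfl, Finset.subset_insert _ _, List.prefix_append _ _⟩
  · obtain ⟨e1, e2⟩ := case_empty n h
    rw [e1, e2]
    exact ⟨subset_rfl, subset_rfl, List.prefix_rfl⟩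

lemma mono_le {n m : ℕ} (h : n ≤ m) :
    (run G A T0 n).1 ⊆ (run G A T0 m).1 ∧ (run G A T0 n).2 ⊆ (run G A T0 m).2 ∧
      trace G A T0 n <+: trace G A T0 m := by
  induction m with
  | zero => simp_all
  | succ m ih =>
    rcases Nat.lt_or_ge n (m+1) with hlt | hge
    · have := ih (Nat.lt_succ_iff.mp hlt)
      obtain ⟨a1, a2, a3⟩ := this
      obtain ⟨b1, b2, b3⟩ := mono_succ (G := G) (A := A) (T0 := T0) m
      exact ⟨a1.trans b1, a2.trans b2, a3.trans b3⟩
    · have : n = m + 1 := le_antisymm h hge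
      subst this
      exact ⟨subset_rfl, subset_rfl, List.prefix_rfl⟩

/-- Basic invariant. -/
lemma invariant (hT0A : ↑T0 ⊆ A) (n : ℕ) :
    T0 ⊆ (run G A T0 n).1 ∧ ↑(run G A T0 n).1 ⊆ A ∧
      ∀ p ∈ (run G A T0 n).2, G.Adj p.1 p.2 ∧ (p.1 : V) ∈ A ∧ p.2 ∉ A := by
  classical
  induction n with
  | zero => exact ⟨subset_rfl, hT0A, by simp [run]⟩
  | succ n ih =>
    obtain ⟨i1, i2, i3⟩ := ih
    by_cases h : (front G (run G A T0 n)).Nonempty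
    · by_cases h2 : h.choose.2 ∈ A
      · obtain ⟨e1, -⟩ := case_in n h h2
        rw [e1]
        refine ⟨i1.trans (Finset.subset_insert _ _), ?_, i3⟩
        intro x hx
        simp only [Finset.coe_insert, Set.mem_insert_iff] at hx
        rcases hx with rfl | hx
        · exact h2
        · exact i2 hx
      · obtain ⟨e1, -⟩ := case_out n h h2
        rw [e1]
        refine ⟨i1, i2, ?_⟩
        intro p hp
        rcases Finset.mem_insert.mp hp with rfl | hp
        · have hc := h.choose_spec
          rw [mem_front] at hc
          exact ⟨hc.1, i2 hc.2.1, h2⟩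
        · exact i3 p hp
    · obtain ⟨e1, -⟩ := case_empty n h
      rw [e1]
      exact ⟨i1, i2, i3⟩

lemma card_growth (n : ℕ) (h : (front G (run G A T0 n)).Nonempty) :
    (run G A T0 (n+1)).1.card + (run G A T0 (n+1)).2.card
      = (run G A T0 n).1.card + (run G A T0 n).2.card + 1 := by
  classical
  have hc := h.choose_spec
  rw [mem_front] at hc
  by_cases h2 : h.choose.2 ∈ A
  · obtain ⟨e1, -⟩ := case_in n h h2
    rw [e1]
    simp only
    rw [Finset.card_insert_of_notMem hc.2.2.1]
    ring
  · obtain ⟨e1, -⟩ := case_out n h h2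
    rw [e1]
    simp only
    rw [Finset.card_insert_of_notMem hc.2.2.2]
    ring

/-- Number of steps that certainly suffice. -/
def NB (V : Type*) [Fintype V] : ℕ := Fintype.card V + Fintype.card V * Fintype.card V + 1

lemma stable {n : ℕ} (h : ¬ (front G (run G A T0 n)).Nonempty) {m : ℕ} (hm : n ≤ m) :
    run G A T0 m = run G A T0 n ∧ trace G A T0 m = trace G A T0 n := by
  induction m with
  | zero =>
    have : n = 0 := Nat.le_zero.mp hm
    subst this; exact ⟨rfl, rfl⟩
  | succ m ih =>
    rcases Nat.lt_or_ge n (m+1) with hlt | hge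
    · obtain ⟨a1, a2⟩ := ih (Nat.lt_succ_iff.mp hlt)
      have h' : ¬ (front G (run G A T0 m)).Nonempty := by rw [a1]; exact h
      obtain ⟨e1, e2⟩ := case_empty m h'
      exact ⟨e1.trans a1, e2.trans a2⟩
    · have : n = m + 1 := le_antisymm hm hge
      subst this; exact ⟨rfl, rfl⟩

lemma final_empty : ¬ (front G (run G A T0 (NB V))).Nonempty := by
  classical
  by_cases hex : ∃ n < NB V, ¬ (front G (run G A T0 n)).Nonempty
  · obtain ⟨n, hn, h⟩ := hex
    have := (stable h (le_of_lt hn)).1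
    rw [this]; exact h
  · push_neg at hex
    exfalso
    have key : ∀ n ≤ NB V, n ≤ (run G A T0 n).1.card + (run G A T0 n).2.card := by
      intro n hn
      induction n with
      | zero => simp
      | succ n ih =>
        have h1 := ih (le_of_lt hn)
        have h2 := card_growth n (hex n (lt_of_lt_of_le (Nat.lt_succ_self n) hn))
        omega
    have h1 := key (NB V) le_rfl
    have h2 : (run G A T0 (NB V)).1.card ≤ Fintype.card V := Finset.card_le_univ _
    have h3 : (run G A T0 (NB V)).2.card ≤ Fintype.card V * Fintype.card V := by
      have := Finset.card_le_univ (run G A T0 (NB V)).2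
      simpa [Fintype.card_prod] using this
    have hNB : NB V = Fintype.card V + Fintype.card V * Fintype.card V + 1 := rfl
    omega


lemma closure (hT0A : ↑T0 ⊆ A) {u w : V} (hu : u ∈ (run G A T0 (NB V)).1)
    (hadj : G.Adj u w) (hw : w ∈ A) : w ∈ (run G A T0 (NB V)).1 := by
  classical
  by_contra hns
  apply final_empty (G := G) (A := A) (T0 := T0)
  by_cases hd : (u, w) ∈ (run G A T0 (NB V)).2
  · exact absurd ((invariant hT0A (NB V)).2.2 _ hd).2.2 (not_not_intro hw)
  · exact ⟨(u, w), mem_front.mpr ⟨hadj, hu, hns, hd⟩⟩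

lemma final_eq (hT0A : ↑T0 ⊆ A)
    (hreach : ∀ v ∈ A, ∃ x ∈ (T0 : Set V), (restrictG G A).Reachable v x) :
    ↑(run G A T0 (NB V)).1 = A := by
  classical
  refine le_antisymm (invariant hT0A (NB V)).2.1 ?_
  intro v hv
  obtain ⟨x, hx, hr⟩ := hreach v hv
  obtain ⟨p⟩ := hr.symm
  have hxs : x ∈ (run G A T0 (NB V)).1 := (invariant hT0A (NB V)).1 hx
  clear hr hx hv
  induction p with
  | nil => exact hxs
  | cons h q ih =>
    obtain ⟨hadj, ha, hb⟩ := h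
    exact ih (closure hT0A hxs hadj hb)

lemma trace_length (n : ℕ) : (trace G A T0 n).length = (run G A T0 n).2.card := by
  classical
  induction n with
  | zero => simp [trace, run]
  | succ n ih =>
    by_cases h : (front G (run G A T0 n)).Nonempty
    · by_cases h2 : h.choose.2 ∈ A
      · obtain ⟨e1, e2⟩ := case_in n h h2
        rw [e1, e2, ih]
      · obtain ⟨e1, e2⟩ := case_out n h h2
        have hc := h.choose_spec
        rw [mem_front] at hc
        rw [e1, e2]
        simp only [List.length_append, List.length_cons, List.length_nil, ih]
        rw [Finset.card_insert_of_notMem hc.2.2.2]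
    · obtain ⟨e1, e2⟩ := case_empty n h
      rw [e1, e2, ih]

lemma dcard_le (hT0A : ↑T0 ⊆ A) (n : ℕ) :
    (run G A T0 n).2.card ≤ (ecut G A).ncard := by
  classical
  have hmap : ∀ p ∈ (run G A T0 n).2, s(p.1, p.2) ∈ ecut G A := by
    intro p hp
    obtain ⟨hadj, h1, h2⟩ := (invariant hT0A n).2.2 p hp
    exact ⟨(SimpleGraph.mem_edgeSet G).mpr hadj, p.1, p.2, rfl, h1, h2⟩
  have hinj : Set.InjOn (fun p : V × V => s(p.1, p.2)) ↑(run G A T0 n).2 := by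
    intro p hp q hq he
    obtain ⟨-, hp1, hp2⟩ := (invariant hT0A n).2.2 p hp
    obtain ⟨-, hq1, hq2⟩ := (invariant hT0A n).2.2 q hq
    simp only [Sym2.eq, Sym2.rel_iff', Prod.mk.injEq, Prod.swap_prod_mk] at he
    rcases he with ⟨e1, e2⟩ | ⟨e1, e2⟩
    · exact Prod.ext e1 e2
    · exact (hq2 (e1 ▸ hp1)).elim
  calc (run G A T0 n).2.card = (↑(run G A T0 n).2 : Set (V × V)).ncard :=
        (Set.ncard_coe_finset _).symm
    _ ≤ (ecut G A).ncard := Set.ncard_le_ncard_of_injOn _ hmap hinj (Set.toFinite _)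

lemma trace_entries (hT0A : ↑T0 ⊆ A) {t : ℕ} (hcard : A.ncard ≤ t) (hT0 : T0.Nonempty)
    (n : ℕ) : ∀ x ∈ trace G A T0 n, x < t := by
  classical
  induction n with
  | zero => simp [trace]
  | succ n ih =>
    by_cases h : (front G (run G A T0 n)).Nonempty
    · by_cases h2 : h.choose.2 ∈ A
      · rw [(case_in n h h2).2]; exact ih
      · rw [(case_out n h h2).2]
        intro x hx
        rcases List.mem_append.mp hx with hx | hx
        · exact ih x hx
        · have hx' : x = (run G A T0 n).1.card - T0.card := by simpa using hx
          have hs : (run G A T0 n).1.card ≤ t := by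
            have h1 : (↑(run G A T0 n).1 : Set V).ncard ≤ A.ncard :=
              Set.ncard_le_ncard (invariant hT0A n).2.1 (Set.toFinite _)
            rw [Set.ncard_coe_finset] at h1
            omega
          have hT0c : 1 ≤ T0.card := Finset.card_pos.mpr hT0
          have hsub : T0.card ≤ (run G A T0 n).1.card :=
            Finset.card_le_card (invariant hT0A n).1
          omega
    · rw [(case_empty n h).2]; exact ih

/-- If the trace still grows after `n`, there is a later "out" step with the same trace. -/
lemma next_out : ∀ k n, NB V - n = k → n < NB V →
    (trace G A T0 n).length < (trace G A T0 (NB V)).length →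
    ∃ n', n ≤ n' ∧ n' < NB V ∧ trace G A T0 n' = trace G A T0 n ∧
      ∃ h : (front G (run G A T0 n')).Nonempty, h.choose.2 ∉ A := by
  classical
  intro k
  induction k using Nat.strong_induction_on with
  | _ k ih =>
    intro n hk hn hlen
    by_cases h : (front G (run G A T0 n)).Nonempty
    · by_cases h2 : h.choose.2 ∈ A
      · have e2 := (case_in n h h2).2
        have hn1 : n + 1 < NB V := by
          rcases Nat.lt_or_ge (n+1) (NB V) with h' | h'
          · exact h'
          · exfalso
            have : n + 1 = NB V := by omega
            rw [← this, e2] at hlen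
            omega
        obtain ⟨n', ha, hb, hcc, hd⟩ := ih (NB V - (n+1)) (by omega) (n+1) rfl hn1
          (by rw [e2]; exact hlen)
        exact ⟨n', by omega, hb, hcc.trans e2, hd⟩
      · exact ⟨n, le_rfl, hn, rfl, h, h2⟩
    · exfalso
      have := (stable h (le_of_lt hn)).2
      rw [this] at hlen
      omega

/-- Key: the in/out decision is determined by the final trace. -/
lemma decision_iff {n : ℕ} (hn : n < NB V) (h : (front G (run G A T0 n)).Nonempty) :
    h.choose.2 ∈ A ↔
      ¬ ((trace G A T0 (NB V))[(trace G A T0 n).length]?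
          = some ((run G A T0 n).1.card - T0.card)) := by
  classical
  constructor
  · intro h2 hget
    -- there is a later out step n' with trace n' = trace n; its entry is recorded
    have hlen : (trace G A T0 n).length < (trace G A T0 (NB V)).length := by
      by_contra hcon
      push_neg at hcon
      rw [List.getElem?_eq_none hcon] at hget
      simp at hget
    obtain ⟨n', ha, hb, hcc, h', h2'⟩ := next_out (NB V - n) n rfl hn hlen
    -- n' ≥ n+1 since at n the decision is "in"
    have hne : n' ≠ n := by
      intro hEq
      subst hEq
      exact h2' h2
    have ha1 : n + 1 ≤ n' := by omega
    have e2 := (case_out n' h' h2').2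
    have hpre : trace G A T0 (n'+1) <+: trace G A T0 (NB V) := (mono_le (by omega)).2.2
    have hget' : (trace G A T0 (NB V))[(trace G A T0 n).length]?
        = some ((run G A T0 n').1.card - T0.card) := by
      obtain ⟨r, hr⟩ := hpre
      rw [← hr, e2, hcc]
      rw [List.getElem?_append_left (by simp)]
      exact List.getElem?_concat_length
    rw [hget'] at hget
    -- but card at n' is strictly bigger than at n
    have hs1 : (insert h.choose.2 (run G A T0 n).1).card = (run G A T0 n).1.card + 1 := by
      have hc := h.choose_spec
      rw [mem_front] at hc
      exact Finset.card_insert_of_notMem hc.2.2.1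
    have hs2 : (run G A T0 (n+1)).1 ⊆ (run G A T0 n').1 := (mono_le ha1).1
    have hs3 : (run G A T0 (n+1)).1.card ≤ (run G A T0 n').1.card := Finset.card_le_card hs2
    rw [(case_in n h h2).1] at hs3
    simp only at hs3
    rw [hs1] at hs3
    have hT0c : T0.card ≤ (run G A T0 n).1.card :=
      Finset.card_le_card (by
        have h0 := (mono_le (G := G) (A := A) (T0 := T0) (Nat.zero_le n)).1
        rwa [show (run G A T0 0).1 = T0 from rfl] at h0)
    have := Option.some.inj hget
    omega
  · intro hget
    by_contra h2
    apply hget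
    have e2 := (case_out n h h2).2
    have hpre : trace G A T0 (n+1) <+: trace G A T0 (NB V) := (mono_le (by omega)).2.2
    obtain ⟨r, hr⟩ := hpre
    rw [← hr, e2]
    rw [List.getElem?_append_left (by simp)]
    exact List.getElem?_concat_length


/-- Determinism: equal final traces give equal runs. -/
lemma run_eq_of_trace_eq {A' : Set V}
    (htr : trace G A T0 (NB V) = trace G A' T0 (NB V)) :
    ∀ n ≤ NB V, run G A T0 n = run G A' T0 n ∧ trace G A T0 n = trace G A' T0 n := by
  classical
  intro n
  induction n with
  | zero => intro _; exact ⟨rfl, rfl⟩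
  | succ n ih =>
    intro hn1
    have hn : n < NB V := by omega
    obtain ⟨hrun, htrn⟩ := ih (le_of_lt hn)
    by_cases h : (front G (run G A T0 n)).Nonempty
    · have h' : (front G (run G A' T0 n)).Nonempty := by rwa [← hrun]
      have hch : h.choose = h'.choose := by
        congr 1
        rw [hrun]
      have hdec : h.choose.2 ∈ A ↔ h'.choose.2 ∈ A' := by
        rw [decision_iff hn h, decision_iff hn h', htr, htrn, hrun]
      by_cases h2 : h.choose.2 ∈ A
      · have h2' : h'.choose.2 ∈ A' := hdec.mp h2
        obtain ⟨e1, e2⟩ := case_in n h h2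
        obtain ⟨e1', e2'⟩ := case_in (G := G) (A := A') n h' h2'
        rw [e1, e2, e1', e2']
        refine ⟨?_, ?_⟩ <;> simp [hrun, htrn, hch]
      · have h2' : h'.choose.2 ∉ A' := fun hcon => h2 (hdec.mpr hcon)
        obtain ⟨e1, e2⟩ := case_out n h h2
        obtain ⟨e1', e2'⟩ := case_out (G := G) (A := A') n h' h2'
        rw [e1, e2, e1', e2']
        refine ⟨?_, ?_⟩ <;> simp [hrun, htrn, hch]
    · have h' : ¬ (front G (run G A' T0 n)).Nonempty := by rwa [← hrun]
      obtain ⟨e1, e2⟩ := case_empty n h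
      obtain ⟨e1', e2'⟩ := case_empty (G := G) (A := A') n h'
      rw [e1, e2, e1', e2', hrun, htrn]
      exact ⟨rfl, rfl⟩


/-- The counting lemma: sets satisfying the cut conditions are determined by their traces. -/
lemma count_main (G : SimpleGraph V) (T0 : Finset V) (hT0ne : T0.Nonempty) (t c : ℕ)
    (S : Set (Set V))
    (hS : ∀ A ∈ S, A.ncard ≤ t ∧ (ecut G A).ncard ≤ c ∧ ↑T0 ⊆ A ∧
      ∀ v ∈ A, ∃ x ∈ (T0 : Set V), (restrictG G A).Reachable v x) :
    S.ncard ≤ (t + 1) ^ c := by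
  classical
  set f : Set V → (Fin c → Fin (t + 1)) := fun A i =>
    ⟨min ((trace G A T0 (NB V)).getD i t) t, Nat.lt_succ_of_le (min_le_right _ _)⟩ with hf
  have hlen : ∀ A ∈ S, (trace G A T0 (NB V)).length ≤ c := by
    intro A hA
    rw [trace_length]
    exact le_trans (dcard_le (hS A hA).2.2.1 _) (hS A hA).2.1
  have hent : ∀ A ∈ S, ∀ x ∈ trace G A T0 (NB V), x < t := by
    intro A hA
    exact trace_entries (hS A hA).2.2.1 (hS A hA).1 hT0ne _
  have hinj : Set.InjOn f S := by
    intro A hA A' hA' hfeq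
    -- first, the traces are equal
    have htr : trace G A T0 (NB V) = trace G A' T0 (NB V) := by
      set l := trace G A T0 (NB V) with hl
      set l' := trace G A' T0 (NB V) with hl'
      have hval : ∀ i : Fin c, min (l.getD i t) t = min (l'.getD i t) t := by
        intro i
        have := congrFun hfeq i
        simpa [hf] using congrArg Fin.val this
      have hlens : l.length = l'.length := by
        by_contra hne
        rcases Nat.lt_or_ge l.length l'.length with hlt | hge
        · have hi : l.length < c := lt_of_lt_of_le hlt (hlen A' hA')
          have h1 := hval ⟨l.length, hi⟩
          rw [List.getD_eq_default _ _ le_rfl, List.getD_eq_getElem _ _ hlt] at h1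
          have h2 : l'[l.length] < t := hent A' hA' _ (List.getElem_mem _)
          simp only [min_self] at h1
          omega
        · have hlt : l'.length < l.length := by omega
          have hi : l'.length < c := lt_of_lt_of_le hlt (hlen A hA)
          have h1 := hval ⟨l'.length, hi⟩
          rw [List.getD_eq_default _ _ le_rfl, List.getD_eq_getElem _ _ hlt] at h1
          have h2 : l[l'.length] < t := hent A hA _ (List.getElem_mem _)
          simp only [min_self] at h1
          omega
      refine List.ext_getElem hlens ?_
      intro n h1 h2
      have hi : n < c := lt_of_lt_of_le h1 (hlen A hA)
      have h3 := hval ⟨n, hi⟩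
      rw [List.getD_eq_getElem _ _ h1, List.getD_eq_getElem _ _ h2] at h3
      have e1 : l[n] < t := hent A hA _ (List.getElem_mem _)
      have e2 : l'[n] < t := hent A' hA' _ (List.getElem_mem _)
      rw [min_eq_left (le_of_lt e1), min_eq_left (le_of_lt e2)] at h3
      exact h3
    have := (run_eq_of_trace_eq htr (NB V) le_rfl).1
    calc A = ↑(run G A T0 (NB V)).1 := (final_eq (hS A hA).2.2.1 (hS A hA).2.2.2).symm
      _ = ↑(run G A' T0 (NB V)).1 := by rw [this]
      _ = A' := final_eq (hS A' hA').2.2.1 (hS A' hA').2.2.2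
  calc S.ncard ≤ (Set.univ : Set (Fin c → Fin (t + 1))).ncard :=
        Set.ncard_le_ncard_of_injOn f (fun a _ => Set.mem_univ _) hinj (Set.toFinite _)
    _ = (t + 1) ^ c := by
        rw [Set.ncard_univ, Nat.card_eq_fintype_card, Fintype.card_fun]
        simp


end CutAux

namespace CompAux

variable {V : Type*} {G : SimpleGraph V} {A : Set V}

/-- The component of `x` in the restriction of `G` to `A`. -/
def comp (G : SimpleGraph V) (A : Set V) (x : V) : Set V :=
  {y | (restrictG G A).Reachable y x}

lemma mem_comp_self (x : V) : x ∈ comp G A x := Reachable.refl _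

lemma comp_subset (hx : x ∈ A) : comp G A x ⊆ A := by
  intro y hy
  obtain ⟨p⟩ := hy
  cases p with
  | nil => exact hx
  | cons h q => exact h.2.1

lemma comp_eq_of_mem {x x' z : V} (h1 : z ∈ comp G A x) (h2 : z ∈ comp G A x') :
    comp G A x = comp G A x' := by
  ext y
  constructor
  · intro hy
    exact hy.trans (h1.symm.trans h2)
  · intro hy
    exact hy.trans (h2.symm.trans h1)

lemma walk_reach {x : V} : ∀ {y : V} (p : (restrictG G A).Walk y x),
    (G.induce (comp G A x)).Reachable ⟨y, ⟨p⟩⟩ ⟨x, mem_comp_self x⟩ := by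
  intro y p
  induction p with
  | nil => exact Reachable.refl _
  | @cons y u x h q ih =>
    have hy : y ∈ comp G A x := ⟨SimpleGraph.Walk.cons h q⟩
    have hu : u ∈ comp G A x := ⟨q⟩
    have hadj : (G.induce (comp G A x)).Adj ⟨y, hy⟩ ⟨u, hu⟩ := h.1
    exact hadj.reachable.trans ih

lemma comp_connected (hx : x ∈ A) : (G.induce (comp G A x)).Connected := by
  rw [SimpleGraph.connected_iff]
  constructor
  · intro a b
    obtain ⟨y, hy⟩ := a
    obtain ⟨z, hz⟩ := b
    obtain ⟨p⟩ := hy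
    obtain ⟨q⟩ := hz
    exact (walk_reach p).trans (walk_reach q).symm
  · exact ⟨⟨x, mem_comp_self x⟩⟩

lemma ecut_comp_subset (hx : x ∈ A) : ecut G (comp G A x) ⊆ ecut G A := by
  rintro e ⟨he, u, w, rfl, hu, hw⟩
  have hadj : G.Adj u w := (SimpleGraph.mem_edgeSet G).mp he
  refine ⟨he, u, w, rfl, comp_subset hx hu, ?_⟩
  intro hwA
  apply hw
  have : (restrictG G A).Adj w u := ⟨hadj.symm, hwA, comp_subset hx hu⟩
  exact this.reachable.trans hu

lemma exists_cross_walk {C : Set V} :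
    ∀ {u w : V}, G.Walk u w → u ∈ C → w ∉ C →
      ∃ p : V × V, G.Adj p.1 p.2 ∧ p.1 ∈ C ∧ p.2 ∉ C := by
  intro u w p
  induction p with
  | nil => intro h1 h2; exact absurd h1 h2
  | @cons u z w h q ih =>
    intro h1 h2
    by_cases hz : z ∈ C
    · exact ih hz h2
    · exact ⟨(u, z), h, h1, hz⟩

lemma exists_cross (hG : G.Connected) {C : Set V} (hne : C.Nonempty) (hne' : C ≠ Set.univ) :
    ∃ p : V × V, G.Adj p.1 p.2 ∧ p.1 ∈ C ∧ p.2 ∉ C := by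
  obtain ⟨u, hu⟩ := hne
  have : ∃ w, w ∉ C := by
    by_contra hcon
    push_neg at hcon
    exact hne' (Set.eq_univ_of_forall hcon)
  obtain ⟨w, hw⟩ := this
  obtain ⟨p⟩ := hG.preconnected u w
  exact exists_cross_walk p hu hw

end CompAux


/-- For a connected graph `G`, positive integers `c`, `t`, and `T' ⊆ T₁ ∪ T₂`: the collection
of `(T', (T₁∪T₂)∖T', t, c)`-cuts `(A, Aᶜ)` in which every connected component of `G[A]`
contains a vertex of `T'` has cardinality at most `(c+1)·t^{c(c+1)}`, and each such `A` is a
disjoint union of `k ≤ c` sets of total cardinality at most `t`, each of which is the small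
side of a simple `(t, c)`-cut meeting `T'`. -/
theorem statement_16 {V : Type*} [Fintype V] [DecidableEq V]
    (G : SimpleGraph V) (hG : G.Connected) (c t : ℕ) (hc : 0 < c) (ht : 0 < t)
    (T₁ T₂ T' : Set V) (hT' : T' ⊆ T₁ ∪ T₂) :
    {A : Set V | A.ncard ≤ t ∧ (ecut G A).ncard ≤ c ∧ A ∩ (T₁ ∪ T₂) = T' ∧
        ∀ v ∈ A, ∃ x ∈ T', (restrictG G A).Reachable v x}.ncard
      ≤ (c + 1) * t ^ (c * (c + 1)) ∧
    ∀ A : Set V,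
      (A.ncard ≤ t ∧ (ecut G A).ncard ≤ c ∧ A ∩ (T₁ ∪ T₂) = T' ∧
        ∀ v ∈ A, ∃ x ∈ T', (restrictG G A).Reachable v x) →
      ∃ k : ℕ, k ≤ c ∧ ∃ f : Fin k → Set V,
        (∀ i j, i ≠ j → Disjoint (f i) (f j)) ∧
        (⋃ i, f i) = A ∧
        (∑ i, (f i).ncard) ≤ t ∧
        ∀ i, (G.induce (f i)).Connected ∧ (f i).ncard ≤ t ∧ (ecut G (f i)).ncard ≤ c ∧
          (f i ∩ T').Nonempty := by
  classical
  set S := {A : Set V | A.ncard ≤ t ∧ (ecut G A).ncard ≤ c ∧ A ∩ (T₁ ∪ T₂) = T' ∧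
      ∀ v ∈ A, ∃ x ∈ T', (restrictG G A).Reachable v x} with hSdef
  have hbound_pos : 0 < (c + 1) * t ^ (c * (c + 1)) := by positivity
  constructor
  · -- Part 1: counting
    by_cases hTe : T' = ∅
    · have hsub : S ⊆ {∅} := by
        intro A hA
        obtain ⟨-, -, -, h4⟩ := hA
        have hAe : A = ∅ := by
          ext v
          simp only [Set.mem_empty_iff_false, iff_false]
          intro hv
          obtain ⟨x, hx, -⟩ := h4 v hv
          rw [hTe] at hx
          exact hx
        simp [hAe]
      calc S.ncard ≤ ({∅} : Set (Set V)).ncard := Set.ncard_le_ncard hsub (Set.toFinite _)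
        _ = 1 := Set.ncard_singleton _
        _ ≤ _ := hbound_pos
    · have hTne : T'.Nonempty := Set.nonempty_iff_ne_empty.mpr hTe
      have hTsub : ∀ A ∈ S, T' ⊆ A := by
        intro A hA
        rw [← hA.2.2.1]
        exact Set.inter_subset_left
      by_cases ht1 : t = 1
      · have hsub : S ⊆ {T'} := by
          intro A hA
          obtain ⟨x, hx⟩ := hTne
          have hxA : x ∈ A := hTsub A hA hx
          have hA1 : A.ncard ≤ 1 := ht1 ▸ hA.1
          have hone : ∀ a ∈ A, ∀ b ∈ A, a = b := (Set.ncard_le_one (Set.toFinite _)).mp hA1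
          have : A = T' := by
            apply Set.eq_of_subset_of_subset
            · intro a ha
              have : a = x := hone a ha x hxA
              rwa [this]
            · exact hTsub A hA
          simp [this]
        calc S.ncard ≤ ({T'} : Set (Set V)).ncard := Set.ncard_le_ncard hsub (Set.toFinite _)
          _ = 1 := Set.ncard_singleton _
          _ ≤ _ := hbound_pos
      · have ht2 : 2 ≤ t := by omega
        set T0 := T'.toFinite.toFinset with hT0
        have hT0coe : (T0 : Set V) = T' := Set.Finite.coe_toFinset _
        have hT0ne : T0.Nonempty := by
          obtain ⟨x, hx⟩ := hTne
          exact ⟨x, (Set.Finite.mem_toFinset _).mpr hx⟩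
        have hS : ∀ A ∈ S, A.ncard ≤ t ∧ (ecut G A).ncard ≤ c ∧ ↑T0 ⊆ A ∧
            ∀ v ∈ A, ∃ x ∈ (T0 : Set V), (restrictG G A).Reachable v x := by
          intro A hA
          refine ⟨hA.1, hA.2.1, by rw [hT0coe]; exact hTsub A hA, ?_⟩
          intro v hv
          obtain ⟨x, hx, hr⟩ := hA.2.2.2 v hv
          exact ⟨x, by rw [hT0coe]; exact hx, hr⟩
        calc S.ncard ≤ (t + 1) ^ c := CutAux.count_main G T0 hT0ne t c S hS
          _ ≤ (t * t) ^ c := Nat.pow_le_pow_left (by nlinarith) c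
          _ = t ^ (2 * c) := by rw [pow_mul, sq]
          _ ≤ t ^ (c * (c + 1)) := Nat.pow_le_pow_right (by omega) (by nlinarith)
          _ ≤ (c + 1) * t ^ (c * (c + 1)) := Nat.le_mul_of_pos_left _ (by omega)
  · -- Part 2: decomposition into components
    rintro A ⟨h1, h2, h3, h4⟩
    have hTA : T' ⊆ A := by rw [← h3]; exact Set.inter_subset_left
    set CS := CompAux.comp G A '' A with hCS
    have hfin : CS.Finite := Set.toFinite _
    set FS := hfin.toFinset with hFS
    have hmemFS : ∀ C, C ∈ FS ↔ C ∈ CS := fun C => Set.Finite.mem_toFinset _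
    have hCsub : ∀ C ∈ CS, C ⊆ A := by
      rintro C ⟨x, hx, rfl⟩
      exact CompAux.comp_subset hx
    have hCne : ∀ C ∈ CS, C.Nonempty := by
      rintro C ⟨x, hx, rfl⟩
      exact ⟨x, CompAux.mem_comp_self x⟩
    have hdisj : ∀ C ∈ CS, ∀ C' ∈ CS, C ≠ C' → Disjoint C C' := by
      rintro C ⟨x, hx, rfl⟩ C' ⟨x', hx', rfl⟩ hne
      rw [Set.disjoint_left]
      intro z hz hz'
      exact hne (CompAux.comp_eq_of_mem hz hz')
    set e := FS.equivFin with he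
    have hkc : FS.card ≤ c := by
      by_cases hU : (Set.univ : Set V) ∈ CS
      · have hCS1 : CS = {Set.univ} := by
          apply Set.eq_of_subset_of_subset
          · intro C hCmem
            simp only [Set.mem_singleton_iff]
            by_contra hne
            have := hdisj C hCmem Set.univ hU hne
            obtain ⟨y, hy⟩ := hCne C hCmem
            exact Set.disjoint_left.mp this hy (Set.mem_univ y)
          · intro C hCmem
            simp only [Set.mem_singleton_iff] at hCmem
            rwa [hCmem]
        have : FS.card = 1 := by
          rw [← Set.ncard_eq_toFinset_card CS hfin, hCS1, Set.ncard_singleton]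
        omega
      · -- every component is proper; pick a crossing edge for each
        have hNV : Nonempty V := hG.nonempty
        set g : Set V → Sym2 V := fun C =>
          if h : ∃ p : V × V, G.Adj p.1 p.2 ∧ p.1 ∈ C ∧ p.2 ∉ C
          then s(h.choose.1, h.choose.2)
          else s(Classical.arbitrary V, Classical.arbitrary V) with hg
        have hcross : ∀ C ∈ CS, ∃ p : V × V, G.Adj p.1 p.2 ∧ p.1 ∈ C ∧ p.2 ∉ C := by
          intro C hCmem
          refine CompAux.exists_cross hG (hCne C hCmem) ?_
          intro hcon
          rw [hcon] at hCmem
          exact hU hCmem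
        have hout : ∀ C ∈ CS, ∀ p : V × V, G.Adj p.1 p.2 → p.1 ∈ C → p.2 ∉ C → p.2 ∉ A := by
          rintro C ⟨x, hx, rfl⟩ p hadj hp1 hp2 hp2A
          apply hp2
          have : (restrictG G A).Adj p.2 p.1 :=
            ⟨hadj.symm, hp2A, CompAux.comp_subset hx hp1⟩
          exact this.reachable.trans hp1
        have hgmem : ∀ C ∈ FS, g C ∈ (Set.toFinite (ecut G A)).toFinset := by
          intro C hCmem
          rw [hmemFS] at hCmem
          have hex := hcross C hCmem
          rw [Set.Finite.mem_toFinset]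
          rw [hg]
          simp only [dif_pos hex]
          obtain ⟨hadj, hp1, hp2⟩ := hex.choose_spec
          exact ⟨(SimpleGraph.mem_edgeSet G).mpr hadj, _, _, rfl,
            hCsub C hCmem hp1, hout C hCmem _ hadj hp1 hp2⟩
        have hginj : Set.InjOn g ↑FS := by
          intro C hC C' hC' hgeq
          rw [Finset.mem_coe, hmemFS] at hC hC'
          have hexC := hcross C hC
          have hexC' := hcross C' hC'
          rw [hg] at hgeq
          simp only [dif_pos hexC, dif_pos hexC'] at hgeq
          obtain ⟨hadj, hp1, hp2⟩ := hexC.choose_spec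
          obtain ⟨hadj', hp1', hp2'⟩ := hexC'.choose_spec
          have hp1A : hexC.choose.1 ∈ A := hCsub C hC hp1
          have hp2A : hexC.choose.2 ∉ A := hout C hC _ hadj hp1 hp2
          have hp1A' : hexC'.choose.1 ∈ A := hCsub C' hC' hp1'
          have hp2A' : hexC'.choose.2 ∉ A := hout C' hC' _ hadj' hp1' hp2'
          have heq1 : hexC.choose.1 = hexC'.choose.1 := by
            rw [Sym2.eq_iff] at hgeq
            rcases hgeq with ⟨e1, -⟩ | ⟨e1, e2⟩
            · exact e1
            · exfalso
              apply hp2A'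
              rw [← e1]
              exact hp1A
          by_contra hne
          have := hdisj C hC C' hC' hne
          exact Set.disjoint_left.mp this hp1 (heq1 ▸ hp1')
        calc FS.card ≤ (Set.toFinite (ecut G A)).toFinset.card :=
              Finset.card_le_card_of_injOn g hgmem hginj
          _ = (ecut G A).ncard := (Set.ncard_eq_toFinset_card _ _).symm
          _ ≤ c := h2
    refine ⟨FS.card, hkc, fun i => ↑(e.symm i), ?_, ?_, ?_, ?_⟩
    · -- disjoint
      intro i j hij
      apply hdisj
      · rw [← hmemFS]; exact (e.symm i).2
      · rw [← hmemFS]; exact (e.symm j).2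
      · intro hcon
        exact hij (e.symm.injective (Subtype.ext hcon))
    · -- union
      apply Set.eq_of_subset_of_subset
      · intro x hx
        obtain ⟨Bs, ⟨i, rfl⟩, hxB⟩ := hx
        exact hCsub _ ((hmemFS _).mp (e.symm i).2) hxB
      · intro x hx
        have hmem : CompAux.comp G A x ∈ FS := (hmemFS _).mpr ⟨x, hx, rfl⟩
        refine Set.mem_iUnion.mpr ⟨e ⟨_, hmem⟩, ?_⟩
        rw [Equiv.symm_apply_apply]
        exact CompAux.mem_comp_self x
    · -- sum of cards
      show ∑ i : Fin FS.card, ((e.symm i : Set V)).ncard ≤ t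
      set F2 : Set V → Finset V := fun C => (Set.toFinite C).toFinset with hF2
      have hstep1 : ∑ i : Fin FS.card, ((e.symm i : Set V)).ncard = ∑ C ∈ FS, C.ncard := by
        rw [← Finset.sum_coe_sort FS (fun C => (C : Set V).ncard)]
        exact Equiv.sum_comp e.symm (fun C : {x // x ∈ FS} => (C : Set V).ncard)
      rw [hstep1]
      have hstep2 : ∑ C ∈ FS, C.ncard = (FS.biUnion F2).card := by
        rw [Finset.card_biUnion]
        · apply Finset.sum_congr rfl
          intro C _
          exact Set.ncard_eq_toFinset_card _ _
        · intro C hC D hD hne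
          rw [hF2]
          simp only [Set.Finite.disjoint_toFinset]
          exact hdisj C ((hmemFS _).mp hC) D ((hmemFS _).mp hD) hne
      rw [hstep2]
      calc (FS.biUnion F2).card ≤ (Set.toFinite A).toFinset.card := by
            apply Finset.card_le_card
            intro x hx
            obtain ⟨C, hC, hxC⟩ := Finset.mem_biUnion.mp hx
            rw [hF2] at hxC
            simp only [Set.Finite.mem_toFinset] at hxC ⊢
            exact hCsub C ((hmemFS _).mp hC) hxC
        _ = A.ncard := (Set.ncard_eq_toFinset_card _ _).symm
        _ ≤ t := h1
    · -- properties of each component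
      intro i
      show (G.induce (↑(e.symm i) : Set V)).Connected ∧ (↑(e.symm i) : Set V).ncard ≤ t ∧
        (ecut G (↑(e.symm i) : Set V)).ncard ≤ c ∧ ((↑(e.symm i) : Set V) ∩ T').Nonempty
      have hCmem : (e.symm i : Set V) ∈ CS := (hmemFS _).mp (e.symm i).2
      obtain ⟨x, hx, hxeq⟩ := hCmem
      refine ⟨?_, ?_, ?_, ?_⟩
      · rw [← hxeq]; exact CompAux.comp_connected hx
      · exact le_trans (Set.ncard_le_ncard (hCsub _ ((hmemFS _).mp (e.symm i).2))
          (Set.toFinite _)) h1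
      · refine le_trans (Set.ncard_le_ncard ?_ (Set.toFinite _)) h2
        rw [← hxeq]
        exact CompAux.ecut_comp_subset hx
      · obtain ⟨x', hx', hr⟩ := h4 x hx
        refine ⟨x', ?_, hx'⟩
        rw [← hxeq]
        exact hr.symm
end
end

section
/- For parameters with s ≥ 6 in the multi-level scheduling scheme with d_i = s^{ξ−i} and t_{i,j} = j·d_i: if the data structure instance D_{i,j} depends on D_{i',j'} for some i' < i (meaning there is a chain j_{i'} = j', ..., j_i = j where each D_{h, j_h} is obtained by running the batch update on D_{h−1, j_{h−1}} with j_h determined by j_{h-1} = ⌈j_h/s⌉ − 2), then t_{i,j} ≤ t_{i', j'+2} + d_{i'}/2. -/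
/-- `t_{i,m} = max(m,0) · s^{ξ−i}`, the time index of the `m`-th batch at level `i` in the
multi-level online-batch scheme with `d_i = s^{ξ−i}`. -/
noncomputable def tval (s ξ i : ℕ) (m : ℤ) : ℚ :=
  ((max m 0 : ℤ) : ℚ) * (s : ℚ) ^ (ξ - i)

/-- If `s ≥ 6` and the data structure instance `D_{i, j i}` depends on `D_{i', j i'}`
(i.e., there is a chain `j_{i'}, …, j_i` with every `j h > 0` and
`j (h−1) = ⌈j h / s⌉ − 2`), then `t_{i, j i} ≤ t_{i', j i' + 2} + d_{i'} / 2`. -/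
theorem statement_17 (s ξ : ℕ) (hs : 6 ≤ s) (i i' : ℕ) (hi' : i' < i) (hi : i ≤ ξ)
    (j : ℕ → ℤ)
    (hpos : ∀ h : ℕ, i' < h → h ≤ i → 0 < j h)
    (hchain : ∀ h : ℕ, i' < h → h ≤ i → j (h - 1) = ⌈(j h : ℚ) / (s : ℚ)⌉ - 2) :
    tval s ξ i (j i) ≤ tval s ξ i' (j i' + 2) + (s : ℚ) ^ (ξ - i') / 2 := by
  have hs0 : (0:ℚ) < (s:ℚ) := by
    have : (0:ℕ) < s := by omega
    exact_mod_cast this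
  have hs6 : (6:ℚ) ≤ (s:ℚ) := by exact_mod_cast hs
  have key : ∀ n h, i' ≤ h → h + n = i →
      ((j i : ℚ) + 5/2) * (s:ℚ)^(ξ - i) ≤ ((j h : ℚ) + 5/2) * (s:ℚ)^(ξ - h) := by
    intro n
    induction n with
    | zero =>
      intro h _ heq
      simp only [Nat.add_zero] at heq
      subst heq
      exact le_refl _
    | succ n ih =>
      intro h hh heq
      have h1i : h + 1 ≤ i := by omega
      have ih' := ih (h+1) (by omega) (by omega)
      refine ih'.trans ?_
      have hch := hchain (h+1) (by omega) h1i
      simp only [Nat.add_sub_cancel] at hch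
      have hceil : ⌈(j (h+1) : ℚ) / (s:ℚ)⌉ = j h + 2 := by omega
      have hle : (j (h+1) : ℚ) / (s:ℚ) ≤ ((j h : ℚ) + 2) := by
        have h2 := Int.le_ceil ((j (h+1) : ℚ) / (s:ℚ))
        rw [hceil] at h2
        push_cast at h2
        linarith
      have hjle : (j (h+1) : ℚ) ≤ (s:ℚ) * ((j h : ℚ) + 2) := by
        rw [div_le_iff₀ hs0] at hle
        linarith
      have hpow : (s:ℚ)^(ξ - h) = (s:ℚ) * (s:ℚ)^(ξ - (h+1)) := by
        have hx : ξ - h = (ξ - (h+1)) + 1 := by omega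
        rw [hx, pow_succ]; ring
      rw [hpow]
      have hpownn : (0:ℚ) ≤ (s:ℚ)^(ξ - (h+1)) := by positivity
      calc ((j (h+1):ℚ) + 5/2) * (s:ℚ)^(ξ-(h+1))
          ≤ ((s:ℚ) * ((j h:ℚ) + 2) + 5/2) * (s:ℚ)^(ξ-(h+1)) := by
            apply mul_le_mul_of_nonneg_right _ hpownn; linarith
        _ ≤ (((j h:ℚ) + 5/2) * (s:ℚ)) * (s:ℚ)^(ξ-(h+1)) := by
            apply mul_le_mul_of_nonneg_right _ hpownn; nlinarith
        _ = ((j h:ℚ) + 5/2) * ((s:ℚ) * (s:ℚ)^(ξ-(h+1))) := by ring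
  have hkey := key (i - i') i' (le_refl _) (by omega)
  have hch0 := hchain (i'+1) (by omega) (by omega)
  simp only [Nat.add_sub_cancel] at hch0
  have hp1 : 0 < j (i'+1) := hpos (i'+1) (by omega) (by omega)
  have hceilpos : 1 ≤ ⌈(j (i'+1) : ℚ) / (s:ℚ)⌉ := by
    apply Int.ceil_pos.mpr
    apply div_pos _ hs0
    exact_mod_cast hp1
  have hji' : 0 ≤ j i' + 2 := by omega
  have hji : 0 ≤ j i := (hpos i hi' (le_refl _)).le
  unfold tval
  rw [max_eq_left hji, max_eq_left hji']
  have hpownn : (0:ℚ) ≤ (s:ℚ)^(ξ - i) := by positivity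
  push_cast
  nlinarith [hkey, hpownn]
end

section
/- Let G = (V, E) be a connected graph with terminal set T ⊆ V, and let t₁, q₁, ..., t_c, q_c and d ≥ c be integers satisfying t ≤ t₁, t_i ≤ q_i for all 1 ≤ i ≤ c, and (d+1)·q_i ≤ t_{i+1} for all 1 ≤ i ≤ c−1. Let E₁, ..., E_c be edge sets such that for each 1 ≤ i ≤ c, E_i is an IA set of the graph G with edges E₁∪...∪E_{i−1} removed, with terminal set T ∪ End(E₁∪...∪E_{i−1}), and parameters (t_i, q_i, d−i+1, 1). Then the union E₁ ∪ ... ∪ E_c is an IA_G(T, t, q_c·(d+1), d, c) set. -/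
open SimpleGraph

section Aux
variable {V : Type*}

lemma mem_ecut_elim {G : SimpleGraph V} {A : Set V} {e : Sym2 V} (he : e ∈ ecut G A) :
    ∃ u v, G.Adj u v ∧ e = s(u, v) ∧ u ∈ A ∧ v ∉ A := by
  obtain ⟨hG, u, v, rfl, hu, hv⟩ := he
  exact ⟨u, v, hG, rfl, hu, hv⟩

lemma mem_ecut_intro {G : SimpleGraph V} {A : Set V} {u v : V} (h : G.Adj u v)
    (hu : u ∈ A) (hv : v ∉ A) : s(u, v) ∈ ecut G A :=
  ⟨h, u, v, rfl, hu, hv⟩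

lemma cut_nonempty_of_walk {G : SimpleGraph V} {X : Set V} :
    ∀ {u w : V}, G.Walk u w → u ∈ X → w ∉ X → (ecut G X).Nonempty := by
  intro u w p
  induction p with
  | nil => intro h h'; exact absurd h h'
  | @cons a y b h p ih =>
    intro ha hb
    by_cases hy : y ∈ X
    · exact ih hy hb
    · exact ⟨s(a, y), mem_ecut_intro h ha hy⟩

lemma comp_mem_self {G : SimpleGraph V} (x : V) : x ∈ {u | G.Reachable u x} := by
  exact Reachable.refl x

lemma isComponentSet_comp (G : SimpleGraph V) (x : V) :
    IsComponentSet G {u | G.Reachable u x} := ⟨x, rfl⟩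

lemma comp_closed_reachable {G : SimpleGraph V} {W : Set V} (hW : IsComponentSet G W)
    {u v : V} (hu : u ∈ W) (h : G.Reachable u v) : v ∈ W := by
  obtain ⟨v₀, rfl⟩ := hW
  exact h.symm.trans hu

lemma comp_reachable {G : SimpleGraph V} {W : Set V} (hW : IsComponentSet G W)
    {u v : V} (hu : u ∈ W) (hv : v ∈ W) : G.Reachable u v := by
  obtain ⟨v₀, rfl⟩ := hW
  exact Reachable.trans hu (Reachable.symm hv)

lemma comp_unique {G : SimpleGraph V} {W W' : Set V} (hW : IsComponentSet G W)
    (hW' : IsComponentSet G W') {x : V} (hx : x ∈ W) (hx' : x ∈ W') : W = W' := by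
  obtain ⟨v, rfl⟩ := hW
  obtain ⟨v', rfl⟩ := hW'
  ext u
  constructor
  · intro hu; exact (hu.trans (Reachable.symm hx)).trans hx'
  · intro hu; exact (hu.trans (Reachable.symm hx')).trans hx

lemma comp_nonempty {G : SimpleGraph V} {W : Set V} (hW : IsComponentSet G W) :
    W.Nonempty := by
  obtain ⟨v, rfl⟩ := hW
  exact ⟨v, Reachable.refl v⟩

end Aux




section Aux2
variable {V : Type*}

lemma part_unique {Pa : Set (Set V)} (hPa : IsVertexPartition Pa) {P P' : Set V}
    (hP : P ∈ Pa) (hP' : P' ∈ Pa) {x : V} (hx : x ∈ P) (hx' : x ∈ P') : P = P' := by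
  obtain ⟨Q, hQ, huniq⟩ := hPa.2 x
  rw [huniq P ⟨hP, hx⟩, huniq P' ⟨hP', hx'⟩]

lemma part_exists {Pa : Set (Set V)} (hPa : IsVertexPartition Pa) (x : V) :
    ∃ P ∈ Pa, x ∈ P := by
  obtain ⟨Q, hQ, _⟩ := hPa.2 x
  exact ⟨Q, hQ.1, hQ.2⟩

/-- If an edge of `H` is not an inter-cluster edge, both its endpoints are in one part. -/
lemma same_part_of_not_inter {H : SimpleGraph V} {Pa : Set (Set V)} {u v : V}
    (h : H.Adj u v) (hni : s(u, v) ∉ interEdges H Pa) : ∃ P ∈ Pa, u ∈ P ∧ v ∈ P := by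
  simp only [interEdges, Set.mem_setOf_eq, not_and, not_exists] at hni
  have := hni (H.mem_edgeSet.2 h) u v
  push_neg at this
  obtain ⟨P, hP, hup⟩ := this rfl
  exact ⟨P, hP, hup⟩

/-- Walking in a subgraph `H'` of `H` avoiding the inter-cluster edges keeps one in a part. -/
lemma same_part_of_reachable {H H' : SimpleGraph V} {Pa : Set (Set V)}
    (hPa : IsVertexPartition Pa) (hle : H' ≤ H)
    (hni : ∀ e ∈ H'.edgeSet, e ∉ interEdges H Pa)
    {a b : V} (hr : H'.Reachable a b) {P : Set V} (hP : P ∈ Pa) (ha : a ∈ P) : b ∈ P := by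
  obtain ⟨p⟩ := hr
  induction p with
  | nil => exact ha
  | @cons a y b h p ih =>
    have h1 : s(a, y) ∉ interEdges H Pa := hni _ (H'.mem_edgeSet.2 h)
    obtain ⟨Q, hQ, haQ, hyQ⟩ := same_part_of_not_inter (hle h) h1
    have : P = Q := part_unique hPa hP hQ ha haQ
    exact ih (this ▸ hyQ)

lemma reachable_induce_of_walk {H : SimpleGraph V} {W : Set V} :
    ∀ {a b : V} (p : H.Walk a b) (ha : a ∈ W) (hb : b ∈ W),
      (∀ x ∈ p.support, x ∈ W) → (H.induce W).Reachable ⟨a, ha⟩ ⟨b, hb⟩ := by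
  intro a b p
  induction p with
  | nil => intro ha hb _; exact Reachable.refl _
  | @cons a y b h p ih =>
    intro ha hb hs
    have hy : y ∈ W := hs y (by simp)
    have hadj : (H.induce W).Adj ⟨a, ha⟩ ⟨y, hy⟩ := by simpa using h
    exact hadj.reachable.trans (ih hy hb fun x hx => hs x (by simp [hx]))

lemma induce_connected_of_component {H G : SimpleGraph V} (hHG : H ≤ G) {W : Set V}
    (hW : IsComponentSet H W) : (G.induce W).Connected := by
  have hind : H.induce W ≤ G.induce W := by
    intro a b hab
    simp only [comap_adj, Function.Embedding.coe_subtype] at hab ⊢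
    exact hHG hab
  refine Connected.mono hind ?_
  obtain ⟨v₀, hWdef⟩ := hW
  have hne : Nonempty (W : Set V) := ⟨⟨v₀, by rw [hWdef]; exact Reachable.refl v₀⟩⟩
  refine Connected.mk (fun a b => ?_)
  obtain ⟨a, ha⟩ := a
  obtain ⟨b, hb⟩ := b
  have hr : H.Reachable a b := by
    have ha' := ha; have hb' := hb
    rw [hWdef] at ha' hb'
    exact Reachable.trans ha' (Reachable.symm hb')
  obtain ⟨p⟩ := hr
  refine reachable_induce_of_walk p ha hb ?_
  intro x hx
  haveI := Classical.decEq V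
  have hax : H.Reachable a x := (p.takeUntil x hx).reachable
  have ha' := ha
  rw [hWdef] at ha' ⊢
  exact hax.symm.trans ha'

end Aux2

lemma ncard_biUnion_le_sum {ι β : Type*} [Finite β] (s : Finset ι) (f : ι → Set β) :
    (⋃ i ∈ s, f i).ncard ≤ ∑ i ∈ s, (f i).ncard := by
  classical
  induction s using Finset.induction_on with
  | empty => simp
  | @insert a s ha ih =>
    rw [Finset.set_biUnion_insert, Finset.sum_insert ha]
    exact le_trans (Set.ncard_union_le _ _) (by omega)

lemma sum_le_ncard_biUnion {ι β : Type*} [Finite β] (s : Finset ι) (f : ι → Set β)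
    (hd : ∀ i ∈ s, ∀ j ∈ s, i ≠ j → Disjoint (f i) (f j)) :
    ∑ i ∈ s, (f i).ncard ≤ (⋃ i ∈ s, f i).ncard := by
  classical
  induction s using Finset.induction_on with
  | empty => simp
  | @insert a s ha ih =>
    rw [Finset.set_biUnion_insert, Finset.sum_insert ha]
    have hdisj : Disjoint (f a) (⋃ i ∈ s, f i) := by
      rw [Set.disjoint_iUnion_right]
      intro i
      rw [Set.disjoint_iUnion_right]
      intro hi
      exact hd a (Finset.mem_insert_self a s) i (Finset.mem_insert_of_mem hi)
        (fun h => ha (h ▸ hi))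
    rw [Set.ncard_union_eq hdisj (Set.toFinite _) (Set.toFinite _)]
    have := ih (fun i hi j hj hij =>
      hd i (Finset.mem_insert_of_mem hi) j (Finset.mem_insert_of_mem hj) hij)
    omega

lemma ncard_biUnion_le_card_mul {β : Type*} [Finite β] {ι : Type*} (s : Set ι)
    (hs : s.Finite) (f : ι → Set β) (m : ℕ) (hm : ∀ i ∈ s, (f i).ncard ≤ m) :
    (⋃ i ∈ s, f i).ncard ≤ s.ncard * m := by
  classical
  have h1 : (⋃ i ∈ s, f i) = ⋃ i ∈ hs.toFinset, f i := by
    simp [Set.Finite.mem_toFinset]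
  rw [h1]
  refine le_trans (ncard_biUnion_le_sum _ _) ?_
  refine le_trans (Finset.sum_le_card_nsmul _ _ m ?_) ?_
  · intro i hi; exact hm i (hs.mem_toFinset.1 hi)
  · rw [smul_eq_mul, Set.ncard_eq_toFinset_card s hs]

lemma ecut_comp_empty {V : Type*} {H : SimpleGraph V} {Q : Set V}
    (hQ : IsComponentSet H Q) : ecut H Q = ∅ := by
  ext e
  simp only [Set.mem_empty_iff_false, iff_false]
  intro he
  obtain ⟨u, v, hadj, rfl, hu, hv⟩ := mem_ecut_elim he
  exact hv (comp_closed_reachable hQ hu hadj.reachable)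

lemma card_le_ncard_biUnion {ι β : Type*} [Finite β] (s : Finset ι) (g : ι → Set β)
    (hne : ∀ i ∈ s, (g i).Nonempty) (hd : ∀ i ∈ s, ∀ j ∈ s, i ≠ j → Disjoint (g i) (g j)) :
    s.card ≤ (⋃ i ∈ s, g i).ncard := by
  refine le_trans ?_ (sum_le_ncard_biUnion s g hd)
  calc s.card = ∑ _i ∈ s, 1 := by simp
  _ ≤ ∑ i ∈ s, (g i).ncard := Finset.sum_le_sum (fun i hi =>
      Set.ncard_pos (Set.toFinite _) |>.2 (hne i hi))

lemma ecut_empty {V : Type*} (H : SimpleGraph V) : ecut H (∅ : Set V) = ∅ := by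
  ext e
  simp only [Set.mem_empty_iff_false, iff_false]
  rintro ⟨_, u, v, _, hu, _⟩
  exact hu


/-- One composition step. -/
lemma step_lemma {V : Type*} [Fintype V] [DecidableEq V]
    (G : SimpleGraph V) (T : Set V) (F F' E' : Set (Sym2 V)) (t' q' d' : ℕ)
    (hFF' : F ⊆ F') (hE'F' : E' ⊆ F')
    (hwithin : ∀ W, IsComponentSet (G.deleteEdges F) W → ∀ e ∈ G.edgeSet,
       (∀ x ∈ e, x ∈ W) → e ∉ F)
    (hIA : IsIASet (G.deleteEdges F) (T ∪ endpts F) t' q' d' 1 E')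
    (T' : Set V) (α k d : ℕ) (hαd : α ≤ d) (hkd' : k ≤ d')
    (B : Set V) (hBT : B ∩ T = T') (hBsize : B.ncard ≤ t')
    (hBcut : (ecut G B).ncard ≤ α)
    (hBpart : ∀ Q, IsComponentSet (G.deleteEdges F) Q →
       (ecut G B ∩ edgesWithin Q).ncard ≤ k) :
    ∃ B' : Set V, B' ∩ T = T' ∧ B'.ncard ≤ t' + d * q' ∧ (ecut G B').ncard ≤ α ∧
      ∀ R, IsComponentSet (G.deleteEdges F') R →
        (ecut G B' ∩ edgesWithin R).ncard ≤ k - 1 := by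
  classical
  set H := G.deleteEdges F with hHdef
  set S : Set V := T ∪ endpts F with hSdef
  obtain ⟨Pa'', hPa'', _hPa''conn, hE'eq, hquery⟩ := hIA
  -- edges of G within an H-component are H-edges, and the cut of B restricted to a
  -- component is the H-cut of the corresponding piece of B
  have hGadjH : ∀ (Q : Set V), IsComponentSet H Q → ∀ u v : V, G.Adj u v → u ∈ Q → v ∈ Q →
      H.Adj u v := by
    intro Q hQ u v huv hu hv
    have : s(u, v) ∉ F := hwithin Q hQ _ (G.mem_edgeSet.2 huv)
      (by intro x hx; rcases Sym2.mem_iff.1 hx with rfl | rfl <;> assumption)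
    rw [hHdef, SimpleGraph.deleteEdges_adj]
    exact ⟨huv, this⟩
  have cutpiece : ∀ (Q : Set V), IsComponentSet H Q →
      ecut H (B ∩ Q) = ecut G B ∩ edgesWithin Q := by
    intro Q hQ
    ext e
    constructor
    · intro he
      obtain ⟨u, v, hadj, rfl, hu, hv⟩ := mem_ecut_elim he
      have hvQ : v ∈ Q := comp_closed_reachable hQ hu.2 hadj.reachable
      have hvB : v ∉ B := fun hvB => hv ⟨hvB, hvQ⟩
      refine ⟨mem_ecut_intro ((G.deleteEdges_le F) hadj) hu.1 hvB, ?_⟩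
      intro x hx
      rcases Sym2.mem_iff.1 hx with rfl | rfl
      exacts [hu.2, hvQ]
    · rintro ⟨he, hew⟩
      obtain ⟨u, v, hadj, rfl, hu, hv⟩ := mem_ecut_elim he
      have huQ : u ∈ Q := hew u (by simp)
      have hvQ : v ∈ Q := hew v (by simp)
      exact mem_ecut_intro (hGadjH Q hQ u v hadj huQ hvQ) ⟨hu, huQ⟩ (fun h => hv h.1)
  have hcutne : ∀ Q, IsComponentSet H Q → ¬ Q ⊆ B → (B ∩ Q).Nonempty →
      (ecut G B ∩ edgesWithin Q).Nonempty := by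
    intro Q hQ hfull hBQ
    obtain ⟨u, huB, huQ⟩ := hBQ
    obtain ⟨w, hwQ, hwB⟩ := Set.not_subset.1 hfull
    obtain ⟨p⟩ := comp_reachable hQ huQ hwQ
    have hwBQ : w ∉ B ∩ Q := fun h => hwB h.1
    have := cut_nonempty_of_walk p (Set.mem_inter huB huQ) hwBQ
    rwa [cutpiece Q hQ] at this
  -- the piece of the new set inside each component
  have hmain : ∀ Q : Set V, ∃ P'' : Set V,
      IsComponentSet H Q →
        P'' ⊆ Q ∧ P'' ∩ S = B ∩ Q ∩ S ∧
        (ecut H P'').ncard ≤ (ecut G B ∩ edgesWithin Q).ncard ∧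
        (∀ R ∈ Pa'', (ecut H P'' ∩ edgesWithin R).ncard ≤
          (ecut G B ∩ edgesWithin Q).ncard - 1) ∧
        (Q ⊆ B → P'' = Q) ∧ (¬ Q ⊆ B → P''.ncard ≤ q') ∧
        (P''.Nonempty → (B ∩ Q).Nonempty) := by
    intro Q
    by_cases hQ : IsComponentSet H Q
    swap
    · exact ⟨∅, fun h => absurd h hQ⟩
    by_cases hfull : Q ⊆ B
    · refine ⟨Q, fun _ => ⟨subset_rfl, ?_, ?_, ?_, fun _ => rfl, fun h => absurd hfull h, ?_⟩⟩
      · rw [Set.inter_eq_self_of_subset_right hfull]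
      · rw [ecut_comp_empty hQ]; simp
      · intro R _; rw [ecut_comp_empty hQ]; simp
      · intro h; exact ⟨h.some, hfull h.some_mem, h.some_mem⟩
    by_cases hTne : (B ∩ Q ∩ S).Nonempty
    swap
    · rw [Set.not_nonempty_iff_eq_empty] at hTne
      refine ⟨∅, fun _ => ⟨Set.empty_subset _, by simp [hTne], ?_, ?_, fun h => absurd h hfull,
        fun _ => by simp, fun h => absurd h (by simp)⟩⟩
      · rw [ecut_empty]; simp
      · intro R _; rw [ecut_empty]; simp
    -- the interesting case: query the IA property of `E'`
    · have hαQ : (ecut H (B ∩ Q)).ncard ≤ d' := by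
        rw [cutpiece Q hQ]
        exact le_trans (hBpart Q hQ) hkd'
      obtain ⟨B'', hB''W, hB''size, hB''T, hB''cut, hB''part⟩ :=
        hquery Q hQ (B ∩ Q ∩ S) (by intro x hx; exact ⟨hx.2, hx.1.2⟩) hTne
          ((ecut H (B ∩ Q)).ncard) hαQ
          ⟨B ∩ Q, Set.inter_subset_right, le_trans (Set.ncard_le_ncard
            Set.inter_subset_left (Set.toFinite _)) hBsize, rfl, rfl⟩
      refine ⟨B'', fun _ => ⟨hB''W, hB''T, ?_, ?_, fun h => absurd h hfull,
        fun _ => hB''size, ?_⟩⟩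
      · rw [← cutpiece Q hQ]; exact hB''cut
      · intro R hR
        rw [← cutpiece Q hQ]
        exact hB''part R hR
      · intro _; exact ⟨hTne.some, hTne.some_mem.1⟩
  choose f hf using hmain
  set cmp : V → Set V := fun x => {u | H.Reachable u x} with hcmp
  have hcmpx : ∀ x, x ∈ cmp x := fun x => Reachable.refl x
  have hcmpc : ∀ x, IsComponentSet H (cmp x) := fun x => ⟨x, rfl⟩
  set B' : Set V := {x | x ∈ f (cmp x)} with hB'def
  have hfsub : ∀ Q, IsComponentSet H Q → f Q ⊆ Q := fun Q hQ => (hf Q hQ).1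
  have hB'Q : ∀ Q, IsComponentSet H Q → B' ∩ Q = f Q := by
    intro Q hQ
    ext x
    constructor
    · rintro ⟨hx1, hx2⟩
      have hcq : cmp x = Q := comp_unique (hcmpc x) hQ (hcmpx x) hx2
      have : x ∈ f (cmp x) := hx1
      rwa [hcq] at this
    · intro hx
      have hxQ : x ∈ Q := hfsub Q hQ hx
      have hcq : cmp x = Q := comp_unique (hcmpc x) hQ (hcmpx x) hxQ
      refine ⟨?_, hxQ⟩
      show x ∈ f (cmp x)
      rwa [hcq]
  have hB'S : B' ∩ S = B ∩ S := by
    ext x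
    have hQ := hcmpc x
    have htr := (hf _ hQ).2.1
    constructor
    · rintro ⟨hx1, hx2⟩
      have hmem : x ∈ f (cmp x) ∩ S := ⟨hx1, hx2⟩
      rw [htr] at hmem
      exact ⟨hmem.1.1, hx2⟩
    · rintro ⟨hx1, hx2⟩
      have hmem : x ∈ f (cmp x) ∩ S := by
        rw [htr]; exact ⟨⟨hx1, hcmpx x⟩, hx2⟩
      exact ⟨hmem.1, hx2⟩
  have hB'T : B' ∩ T = T' := by
    rw [← hBT]
    ext x
    constructor
    · rintro ⟨hx1, hx2⟩
      have hmem : x ∈ B' ∩ S := ⟨hx1, Or.inl hx2⟩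
      rw [hB'S] at hmem
      exact ⟨hmem.1, hx2⟩
    · rintro ⟨hx1, hx2⟩
      have hmem : x ∈ B ∩ S := ⟨hx1, Or.inl hx2⟩
      rw [← hB'S] at hmem
      exact ⟨hmem.1, hx2⟩
  set Kq : Set (Set V) :=
    {Q | IsComponentSet H Q ∧ ¬ Q ⊆ B ∧ (ecut G B ∩ edgesWithin Q).Nonempty} with hKq
  have hfQwin : ∀ Q, IsComponentSet H Q → ecut H (f Q) ⊆ edgesWithin Q := by
    intro Q hQ e he
    obtain ⟨u, v, hadj, rfl, hu, hv⟩ := mem_ecut_elim he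
    have huQ := hfsub Q hQ hu
    have hvQ := comp_closed_reachable hQ huQ hadj.reachable
    intro x hx; rcases Sym2.mem_iff.1 hx with rfl | rfl <;> assumption
  have hdisjB : ∀ Q ∈ (Set.toFinite Kq).toFinset, ∀ Q' ∈ (Set.toFinite Kq).toFinset, Q ≠ Q' →
      Disjoint (ecut G B ∩ edgesWithin Q) (ecut G B ∩ edgesWithin Q') := by
    intro Q hQ Q' hQ' hne
    rw [Set.Finite.mem_toFinset] at hQ hQ'
    rw [Set.disjoint_left]
    rintro e ⟨he, hw⟩ ⟨_, hw'⟩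
    obtain ⟨u, v, _, rfl, _, _⟩ := mem_ecut_elim he
    exact hne (comp_unique hQ.1 hQ'.1 (hw u (by simp)) (hw' u (by simp)))
  have hXdec : ∀ e ∈ ecut G B', e ∉ F → ∃ Q ∈ Kq, e ∈ ecut H (f Q) := by
    intro e he heF
    obtain ⟨u, v, hadj, rfl, hu, hv⟩ := mem_ecut_elim he
    have hHadj : H.Adj u v := by
      rw [hHdef, SimpleGraph.deleteEdges_adj]; exact ⟨hadj, heF⟩
    have hQ := hcmpc u
    have hvQ : v ∈ cmp u := comp_closed_reachable hQ (hcmpx u) hHadj.reachable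
    have hufQ : u ∈ f (cmp u) := hu
    have hvfQ : v ∉ f (cmp u) := by
      intro h
      rw [← hB'Q _ hQ] at h
      exact hv h.1
    have hmem : s(u, v) ∈ ecut H (f (cmp u)) := mem_ecut_intro hHadj hufQ hvfQ
    have hnotfull : ¬ cmp u ⊆ B := by
      intro hfull
      have hfq : f (cmp u) = cmp u := (hf _ hQ).2.2.2.2.1 hfull
      rw [hfq] at hvfQ
      exact hvfQ hvQ
    have hne : (ecut G B ∩ edgesWithin (cmp u)).Nonempty :=
      hcutne _ hQ hnotfull ((hf _ hQ).2.2.2.2.2.2 ⟨u, hufQ⟩)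
    exact ⟨cmp u, ⟨hQ, hnotfull, hne⟩, hmem⟩
  -- the cut of B' agrees with the cut of B on F
  have hXF : ecut G B' ∩ F = ecut G B ∩ F := by
    have key : ∀ x ∈ endpts F, (x ∈ B' ↔ x ∈ B) := by
      intro x hx
      have h1 : x ∈ S := Or.inr hx
      constructor
      · intro h
        have hm : x ∈ B' ∩ S := ⟨h, h1⟩
        rw [hB'S] at hm; exact hm.1
      · intro h
        have hm : x ∈ B ∩ S := ⟨h, h1⟩
        rw [← hB'S] at hm; exact hm.1
    ext e
    simp only [Set.mem_inter_iff]
    constructor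
    · rintro ⟨he, heF⟩
      obtain ⟨u, v, hadj, rfl, hu, hv⟩ := mem_ecut_elim he
      have hu' : u ∈ endpts F := ⟨_, heF, by simp⟩
      have hv' : v ∈ endpts F := ⟨_, heF, by simp⟩
      exact ⟨mem_ecut_intro hadj ((key u hu').1 hu) (fun h => hv ((key v hv').2 h)), heF⟩
    · rintro ⟨he, heF⟩
      obtain ⟨u, v, hadj, rfl, hu, hv⟩ := mem_ecut_elim he
      have hu' : u ∈ endpts F := ⟨_, heF, by simp⟩
      have hv' : v ∈ endpts F := ⟨_, heF, by simp⟩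
      exact ⟨mem_ecut_intro hadj ((key u hu').2 hu) (fun h => hv ((key v hv').1 h)), heF⟩
  have hXdiff : (ecut G B' \ F).ncard ≤ (ecut G B \ F).ncard := by
    have h1 : ecut G B' \ F ⊆ ⋃ Q ∈ (Set.toFinite Kq).toFinset, ecut H (f Q) := by
      rintro e ⟨he, heF⟩
      obtain ⟨Q, hQK, heQ⟩ := hXdec e he heF
      exact Set.mem_biUnion ((Set.Finite.mem_toFinset _).2 hQK) heQ
    refine le_trans (Set.ncard_le_ncard h1 (Set.toFinite _)) ?_
    refine le_trans (ncard_biUnion_le_sum _ _) ?_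
    have h2 : ∑ Q ∈ (Set.toFinite Kq).toFinset, (ecut H (f Q)).ncard ≤
        ∑ Q ∈ (Set.toFinite Kq).toFinset, (ecut G B ∩ edgesWithin Q).ncard :=
      Finset.sum_le_sum (fun Q hQ => (hf Q ((Set.Finite.mem_toFinset _).1 hQ).1).2.2.1)
    refine le_trans h2 ?_
    refine le_trans (sum_le_ncard_biUnion _ _ hdisjB) (Set.ncard_le_ncard ?_ (Set.toFinite _))
    intro e he
    rw [Set.mem_iUnion₂] at he
    obtain ⟨Q, hQ, he'⟩ := he
    rw [Set.Finite.mem_toFinset] at hQ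
    exact ⟨he'.1, hwithin Q hQ.1 e he'.1.1 he'.2⟩
  have hcut' : (ecut G B').ncard ≤ α := by
    have e1 := Set.ncard_inter_add_ncard_diff_eq_ncard (ecut G B') F (Set.toFinite _)
    have e2 := Set.ncard_inter_add_ncard_diff_eq_ncard (ecut G B) F (Set.toFinite _)
    rw [hXF] at e1
    omega
  -- size bound
  have hKd : Kq.ncard ≤ d := by
    have h0 : Kq.ncard ≤
        (⋃ Q ∈ (Set.toFinite Kq).toFinset, (ecut G B ∩ edgesWithin Q)).ncard := by
      rw [Set.ncard_eq_toFinset_card Kq (Set.toFinite Kq)]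
      exact card_le_ncard_biUnion _ _
        (fun Q hQ => ((Set.Finite.mem_toFinset _).1 hQ).2.2) hdisjB
    refine le_trans h0 (le_trans (Set.ncard_le_ncard ?_ (Set.toFinite _))
      (le_trans hBcut hαd))
    intro e he
    rw [Set.mem_iUnion₂] at he
    obtain ⟨Q, hQ, he'⟩ := he
    exact he'.1
  have hB'size : B'.ncard ≤ t' + d * q' := by
    have hsub : B' ⊆ B ∪ ⋃ Q ∈ Kq, f Q := by
      intro x hx
      have hQ := hcmpc x
      by_cases hfull : cmp x ⊆ B
      · exact Or.inl (hfull (hfsub _ hQ hx))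
      · have hne := hcutne _ hQ hfull ((hf _ hQ).2.2.2.2.2.2 ⟨x, hx⟩)
        exact Or.inr (Set.mem_biUnion ⟨hQ, hfull, hne⟩ hx)
    refine le_trans (Set.ncard_le_ncard hsub (Set.toFinite _)) ?_
    refine le_trans (Set.ncard_union_le _ _) ?_
    have h1 : (⋃ Q ∈ Kq, f Q).ncard ≤ Kq.ncard * q' :=
      ncard_biUnion_le_card_mul Kq (Set.toFinite _) f q'
        (fun Q hQ => (hf Q hQ.1).2.2.2.2.2.1 hQ.2.1)
    have h2 : Kq.ncard * q' ≤ d * q' := Nat.mul_le_mul_right q' hKd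
    omega
  -- the per-part bound for the new components
  have hpart' : ∀ R, IsComponentSet (G.deleteEdges F') R →
      (ecut G B' ∩ edgesWithin R).ncard ≤ k - 1 := by
    intro R hR
    obtain ⟨x₀, hx₀⟩ := comp_nonempty hR
    have hQ := hcmpc x₀
    have hle' : G.deleteEdges F' ≤ H := by
      rw [hHdef]; exact SimpleGraph.deleteEdges_anti hFF'
    have hRQ : R ⊆ cmp x₀ := by
      intro y hy
      exact comp_closed_reachable hQ (hcmpx x₀)
        (Reachable.mono hle' (comp_reachable hR hx₀ hy))
    obtain ⟨Rp, hRp, hx₀Rp⟩ := part_exists hPa'' x₀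
    have hRRp : R ⊆ Rp := by
      intro y hy
      refine same_part_of_reachable hPa'' hle' ?_ (comp_reachable hR hx₀ hy) hRp hx₀Rp
      intro e he heE
      rw [SimpleGraph.edgeSet_deleteEdges] at he
      rw [← hE'eq] at heE
      exact he.2 (hE'F' heE)
    have hsub2 : ecut G B' ∩ edgesWithin R ⊆ ecut H (f (cmp x₀)) ∩ edgesWithin Rp := by
      rintro e ⟨he, hw⟩
      have hwQ : ∀ x ∈ e, x ∈ cmp x₀ := fun x hx => hRQ (hw x hx)
      have heF : e ∉ F := hwithin _ hQ e he.1 hwQ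
      obtain ⟨Q', hQ'K, heQ'⟩ := hXdec e he heF
      have hQeq : Q' = cmp x₀ := by
        obtain ⟨u, v, _, hrep, _, _⟩ := mem_ecut_elim he
        have hue : u ∈ e := by rw [hrep]; simp
        exact comp_unique hQ'K.1 hQ (hfQwin _ hQ'K.1 heQ' u hue) (hwQ u hue)
      exact ⟨hQeq ▸ heQ', fun x hx => hRRp (hw x hx)⟩
    have h4 := (hf _ hQ).2.2.2.1 Rp hRp
    have h5 := hBpart _ hQ
    refine le_trans (Set.ncard_le_ncard hsub2 (Set.toFinite _)) (le_trans h4 ?_)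
    omega
  exact ⟨B', hB'T, hB'size, hcut', hpart'⟩

lemma isVertexPartition_components {V : Type*} (H : SimpleGraph V) :
    IsVertexPartition {Q | IsComponentSet H Q} := by
  constructor
  · intro P hP; exact comp_nonempty hP
  · intro x
    refine ⟨{u | H.Reachable u x}, ⟨isComponentSet_comp H x, Reachable.refl x⟩, ?_⟩
    rintro Q ⟨hQ, hxQ⟩
    exact comp_unique hQ (isComponentSet_comp H x) hxQ (Reachable.refl x)

lemma Fs_mono {V : Type*} (E : ℕ → Set (Sym2 V)) {j m : ℕ} (h : j ≤ m) :
    (⋃ l ∈ Set.Ico 1 j, E l) ⊆ ⋃ l ∈ Set.Ico 1 m, E l := by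
  intro e he
  simp only [Set.mem_iUnion, exists_prop] at he ⊢
  obtain ⟨l, hl, hel⟩ := he
  exact ⟨l, ⟨hl.1, lt_of_lt_of_le hl.2 h⟩, hel⟩

lemma reach_same_part {V : Type*} (G : SimpleGraph V) (E : ℕ → Set (Sym2 V))
    (Paj : Set (Set V)) (j m : ℕ) (hjm : j < m) (hj1 : 1 ≤ j)
    (hPaj : IsVertexPartition Paj)
    (hEj : E j = interEdges (G.deleteEdges (⋃ l ∈ Set.Ico 1 j, E l)) Paj)
    {u v : V} (hr : (G.deleteEdges (⋃ l ∈ Set.Ico 1 m, E l)).Reachable u v) :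
    ∃ P ∈ Paj, u ∈ P ∧ v ∈ P := by
  obtain ⟨P, hP, huP⟩ := part_exists hPaj u
  refine ⟨P, hP, huP, same_part_of_reachable hPaj
    (SimpleGraph.deleteEdges_anti (Fs_mono E (le_of_lt hjm))) ?_ hr hP huP⟩
  intro e he heEj
  rw [SimpleGraph.edgeSet_deleteEdges] at he
  rw [← hEj] at heEj
  refine he.2 ?_
  simp only [Set.mem_iUnion, exists_prop]
  exact ⟨j, ⟨hj1, hjm⟩, heEj⟩

lemma within_component_lemma {V : Type*} (G : SimpleGraph V) (E : ℕ → Set (Sym2 V))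
    (Pa : ℕ → Set (Set V)) (c : ℕ)
    (hPa : ∀ j, 1 ≤ j → j ≤ c → IsVertexPartition (Pa j) ∧
      E j = interEdges (G.deleteEdges (⋃ l ∈ Set.Ico 1 j, E l)) (Pa j))
    (m : ℕ) (hm : m ≤ c + 1) :
    ∀ W, IsComponentSet (G.deleteEdges (⋃ j ∈ Set.Ico 1 m, E j)) W →
      ∀ e ∈ G.edgeSet, (∀ x ∈ e, x ∈ W) → e ∉ ⋃ j ∈ Set.Ico 1 m, E j := by
  intro W hW e heG hwin hmem
  simp only [Set.mem_iUnion, exists_prop] at hmem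
  obtain ⟨j, ⟨hj1, hjm⟩, hej⟩ := hmem
  have hjc : j ≤ c := by omega
  obtain ⟨hPaj, hEj⟩ := hPa j hj1 hjc
  have hej' := hej
  rw [hEj] at hej'
  obtain ⟨_, u, v, hrep, hno⟩ := hej'
  have hue : u ∈ e := by rw [hrep]; simp
  have hve : v ∈ e := by rw [hrep]; simp
  have hr : (G.deleteEdges (⋃ l ∈ Set.Ico 1 m, E l)).Reachable u v :=
    comp_reachable hW (hwin u hue) (hwin v hve)
  obtain ⟨P, hP, huP, hvP⟩ := reach_same_part G E (Pa j) j m hjm hj1 hPaj hEj hr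
  exact hno P hP ⟨huP, hvP⟩

lemma final_interEdges {V : Type*} (G : SimpleGraph V) (E : ℕ → Set (Sym2 V))
    (Pa : ℕ → Set (Set V)) (c : ℕ)
    (hPa : ∀ j, 1 ≤ j → j ≤ c → IsVertexPartition (Pa j) ∧
      E j = interEdges (G.deleteEdges (⋃ l ∈ Set.Ico 1 j, E l)) (Pa j)) :
    interEdges G {Q | IsComponentSet (G.deleteEdges (⋃ j ∈ Set.Ico 1 (c+1), E j)) Q}
      = ⋃ j ∈ Set.Ico 1 (c + 1), E j := by
  set H := G.deleteEdges (⋃ j ∈ Set.Ico 1 (c+1), E j) with hH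
  ext e
  constructor
  · rintro ⟨heG, u, v, hrep, hno⟩
    by_contra hne
    have hadj : H.Adj u v := by
      rw [hH, SimpleGraph.deleteEdges_adj]
      exact ⟨G.mem_edgeSet.1 (hrep ▸ heG), fun h => hne (hrep ▸ h)⟩
    refine hno {w | H.Reachable w u} (isComponentSet_comp H u) ⟨Reachable.refl u, ?_⟩
    exact hadj.symm.reachable
  · intro hmem
    have hmem' := hmem
    simp only [Set.mem_iUnion, exists_prop] at hmem'
    obtain ⟨j, ⟨hj1, hjm⟩, hej⟩ := hmem'
    have hjc : j ≤ c := by omega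
    obtain ⟨hPaj, hEj⟩ := hPa j hj1 hjc
    rw [hEj] at hej
    obtain ⟨heHj, u, v, hrep, hno⟩ := hej
    rw [SimpleGraph.edgeSet_deleteEdges] at heHj
    refine ⟨heHj.1, u, v, hrep, ?_⟩
    rintro Q hQ ⟨huQ, hvQ⟩
    have hr : H.Reachable u v := comp_reachable hQ huQ hvQ
    obtain ⟨P, hP, huP, hvP⟩ := reach_same_part G E (Pa j) j (c+1) hjm hj1 hPaj hEj hr
    exact hno P hP ⟨huP, hvP⟩

/-- Iterated composition of IA sets: let `G` be connected with terminals `T`, `d ≥ c`, and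
let `t₁, q₁, …, t_c, q_c` satisfy `t ≤ t₁`, `tᵢ ≤ qᵢ` for `1 ≤ i ≤ c` and
`(d+1)·qᵢ ≤ t_{i+1}` for `1 ≤ i ≤ c−1`.  If for each `1 ≤ i ≤ c` the set `E i` is an
`IA` set of `G` minus `E₁ ∪ … ∪ E_{i−1}` with terminals `T ∪ End(E₁ ∪ … ∪ E_{i−1})` and
parameters `(tᵢ, qᵢ, d−i+1, 1)`, then `E₁ ∪ … ∪ E_c` is an
`IA_G(T, t, q_c·(d+1), d, c)` set. -/
theorem statement_19 {V : Type*} [Fintype V] [DecidableEq V]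
    (G : SimpleGraph V) (hG : G.Connected) (T : Set V)
    (c d t : ℕ) (hc : 0 < c) (hcd : c ≤ d)
    (ts qs : ℕ → ℕ)
    (ht1 : t ≤ ts 1)
    (htq : ∀ i : ℕ, 1 ≤ i → i ≤ c → ts i ≤ qs i)
    (hstep : ∀ i : ℕ, 1 ≤ i → i ≤ c - 1 → (d + 1) * qs i ≤ ts (i + 1))
    (E : ℕ → Set (Sym2 V))
    (hE : ∀ i : ℕ, 1 ≤ i → i ≤ c →
      IsIASet (G.deleteEdges (⋃ j ∈ Set.Ico 1 i, E j))
        (T ∪ endpts (⋃ j ∈ Set.Ico 1 i, E j)) (ts i) (qs i) (d - i + 1) 1 (E i)) :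
    IsIASet G T t (qs c * (d + 1)) d c (⋃ j ∈ Set.Ico 1 (c + 1), E j) := by
  classical
  have hPaEx : ∀ j, ∃ Paj : Set (Set V), 1 ≤ j → j ≤ c → IsVertexPartition Paj ∧
      E j = interEdges (G.deleteEdges (⋃ l ∈ Set.Ico 1 j, E l)) Paj := by
    intro j
    by_cases h : 1 ≤ j ∧ j ≤ c
    · obtain ⟨Paj, h1, _, h3, _⟩ := hE j h.1 h.2
      exact ⟨Paj, fun _ _ => ⟨h1, h3⟩⟩
    · exact ⟨∅, fun h1 h2 => absurd ⟨h1, h2⟩ h⟩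
  choose Pa hPa using hPaEx
  refine ⟨{Q | IsComponentSet (G.deleteEdges (⋃ j ∈ Set.Ico 1 (c+1), E j)) Q},
    isVertexPartition_components _, ?_, (final_interEdges G E Pa c hPa).symm, ?_⟩
  · intro P hP
    exact induce_connected_of_component (SimpleGraph.deleteEdges_le _) hP
  intro W hW T' hT'sub hT'ne α hα hA
  obtain ⟨A, hAW, hAcard, hAT, hAcut⟩ := hA
  have main : ∀ i, i ≤ c → ∃ B : Set V, B ∩ T = T' ∧
      B.ncard ≤ (if i = 0 then t else qs i * (d + 1)) ∧ (ecut G B).ncard ≤ α ∧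
      ∀ Q, IsComponentSet (G.deleteEdges (⋃ j ∈ Set.Ico 1 (i+1), E j)) Q →
        (ecut G B ∩ edgesWithin Q).ncard ≤ α - i := by
    intro i
    induction i with
    | zero =>
      intro _
      refine ⟨A, hAT, by simpa using hAcard, le_of_eq hAcut, fun Q hQ => ?_⟩
      simp only [Nat.sub_zero]
      rw [← hAcut]
      exact Set.ncard_le_ncard Set.inter_subset_left (Set.toFinite _)
    | succ i ih =>
      intro hic
      obtain ⟨B, hBT, hBsize, hBcut, hBpart⟩ := ih (le_trans (Nat.le_succ i) hic)
      have h1i : 1 ≤ i + 1 := Nat.le_add_left 1 i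
      have hIA := hE (i + 1) h1i hic
      have hFF' : (⋃ j ∈ Set.Ico 1 (i+1), E j) ⊆ ⋃ j ∈ Set.Ico 1 (i+2), E j :=
        Fs_mono E (by omega)
      have hE'F' : E (i+1) ⊆ ⋃ j ∈ Set.Ico 1 (i+2), E j := by
        intro e he
        simp only [Set.mem_iUnion, exists_prop]
        exact ⟨i+1, ⟨h1i, by omega⟩, he⟩
      have hwithin := within_component_lemma G E Pa c hPa (i+1) (by omega)
      have hkd' : α - i ≤ d - (i + 1) + 1 := by omega
      have hBsize' : B.ncard ≤ ts (i + 1) := by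
        rcases Nat.eq_zero_or_pos i with rfl | hipos
        · rw [if_pos rfl] at hBsize
          exact le_trans hBsize ht1
        · rw [if_neg (by omega)] at hBsize
          refine le_trans hBsize (le_trans (le_of_eq (Nat.mul_comm _ _))
            (hstep i hipos (by omega)))
      obtain ⟨B', h1, h2, h3, h4⟩ := step_lemma G T _ _ (E (i+1)) (ts (i+1)) (qs (i+1))
        (d - (i+1) + 1) hFF' hE'F' hwithin hIA T' α (α - i) d hα hkd' B hBT hBsize'
        hBcut hBpart
      refine ⟨B', h1, ?_, h3, fun Q hQ => ?_⟩
      · rw [if_neg (by omega)]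
        have hq := htq (i+1) h1i hic
        have hmul : qs (i+1) * (d + 1) = qs (i+1) * d + qs (i+1) := by ring
        have hmul2 : d * qs (i + 1) = qs (i + 1) * d := Nat.mul_comm _ _
        omega
      · have := h4 Q hQ
        omega
  obtain ⟨B, hBT, hBsize, hBcut, hBpart⟩ := main c (le_refl c)
  have hWuniv : W = Set.univ := by
    obtain ⟨v₀, rfl⟩ := hW
    ext u
    simp only [Set.mem_univ, iff_true, Set.mem_setOf_eq]
    exact hG.preconnected u v₀
  refine ⟨B, by rw [hWuniv]; exact Set.subset_univ _, ?_, hBT, hBcut, fun P hP => hBpart P hP⟩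
  rw [if_neg (by omega)] at hBsize
  exact hBsize
end
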